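/- arXiv:2005.01349 — 6 statements merged into one kernel-verified Lean document; each statement's English description precedes it below -/
import Mathlib

section
/- Let T be a directed spanning tree on {1,...,N} rooted at 1 with parent map p satisfying p(k) < k. For node j, let V_j ⊆ {1,...,N} denote the vertex set of the subtree of T rooted at j. Define J ∈ ℝ^{N×(N−1)} by J_{ik} = 0 if i ∈ V_{k+1} and J_{ik} = 1 otherwise, and define Ξ ∈ ℝ^{(N−1)×N} by Ξ_{k,k+1} = −1, Ξ_{k,p(k+1)} = 1, zero otherwise. Then the matrix X = JΞ satisfies X_{ij} = D(j) if i = j and X_{ij} = D(j) − 1 if i ≠ j, where D(j) is the out-degree of node j in T (number of children of j). -/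
open Matrix

theorem stmt_3 (m : ℕ) (p : Fin m → Fin (m + 1)) (hp : ∀ k, p k < k.succ)
    (V : Fin m → Finset (Fin (m + 1)))
    (hV : ∀ (c : Fin m) (i : Fin (m + 1)),
      i ∈ V c ↔ (i = c.succ ∨ ∃ h : i ≠ 0, p (i.pred h) ∈ V c))
    (J : Matrix (Fin (m + 1)) (Fin m) ℝ)
    (hJ : ∀ i k, J i k = if i ∈ V k then 0 else 1)
    (Ξ : Matrix (Fin m) (Fin (m + 1)) ℝ)
    (hΞ : ∀ k j, Ξ k j = if j = k.succ then -1 else if j = p k then 1 else 0)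
    (D : Fin (m + 1) → ℕ)
    (hD : ∀ j, D j = (Finset.univ.filter fun k : Fin m => p k = j).card) :
    ∀ i j : Fin (m + 1),
      (J * Ξ) i j = if i = j then (D j : ℝ) else (D j : ℝ) - 1 := by
  -- predecessor strictly decreases
  have hdec : ∀ (i : Fin (m + 1)) (h : i ≠ 0), (p (i.pred h)).val < i.val := by
    intro i h
    have := hp (i.pred h)
    rw [Fin.succ_pred] at this
    exact this
  -- L1 : elements of V c are ≥ c.succ
  have L1 : ∀ n, ∀ i : Fin (m + 1), i.val = n → ∀ c : Fin m, i ∈ V c → c.succ ≤ i := by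
    intro n
    induction n using Nat.strong_induction_on with
    | _ n ih =>
      rintro i rfl c hi
      rcases (hV c i).1 hi with h | ⟨h0, hp'⟩
      · exact le_of_eq h.symm
      · exact le_trans (ih _ (hdec i h0) _ rfl c hp') (le_of_lt (hdec i h0))
  -- L2 : c.succ ∈ V c
  have L2 : ∀ c : Fin m, c.succ ∈ V c := fun c => (hV c c.succ).2 (Or.inl rfl)
  -- M : monotonicity along parents
  have M : ∀ n, ∀ i : Fin (m + 1), i.val = n → ∀ k c : Fin m,
      i ∈ V k → p k ∈ V c → i ∈ V c := by
    intro n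
    induction n using Nat.strong_induction_on with
    | _ n ih =>
      rintro i rfl k c hik hpk
      rcases (hV k i).1 hik with h | ⟨h0, hp'⟩
      · have h0 : i ≠ 0 := h ▸ Fin.succ_ne_zero k
        refine (hV c i).2 (Or.inr ⟨h0, ?_⟩)
        have : i.pred h0 = k := by simp [h]
        rw [this]; exact hpk
      · exact (hV c i).2 (Or.inr ⟨h0, ih _ (hdec i h0) _ rfl k c hp' hpk⟩)
  -- U : uniqueness of the child subtree containing i among siblings
  have U : ∀ n, ∀ i : Fin (m + 1), i.val = n → ∀ k1 k2 : Fin m,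
      p k1 = p k2 → i ∈ V k1 → i ∈ V k2 → k1 = k2 := by
    intro n
    induction n using Nat.strong_induction_on with
    | _ n ih =>
      rintro i rfl k1 k2 hpe h1 h2
      rcases (hV k1 i).1 h1 with e1 | ⟨h0, hq1⟩
      · rcases (hV k2 i).1 h2 with e2 | ⟨h0, hq2⟩
        · exact Fin.succ_injective _ (e1.symm.trans e2)
        · exfalso
          have hk : i.pred h0 = k1 := by simp [e1]
          rw [hk] at hq2
          have := L1 _ (p k1) rfl k2 hq2
          rw [hpe] at this
          exact absurd (lt_of_lt_of_le (hp k2) this) (lt_irrefl _)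
      · rcases (hV k2 i).1 h2 with e2 | ⟨h0', hq2⟩
        · exfalso
          have hk : i.pred h0 = k2 := by simp [e2]
          rw [hk] at hq1
          have := L1 _ (p k2) rfl k1 hq1
          rw [← hpe] at this
          exact absurd (lt_of_lt_of_le (hp k1) this) (lt_irrefl _)
        · exact ih _ (hdec i h0) _ rfl k1 k2 hpe hq1 hq2
  -- E : existence of a child of j whose subtree contains i
  have E : ∀ n, ∀ i : Fin (m + 1), i.val = n → ∀ j : Fin (m + 1), i ≠ j →
      (j = 0 ∨ ∃ h : j ≠ 0, i ∈ V (j.pred h)) → ∃ k, p k = j ∧ i ∈ V k := by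
    intro n
    induction n using Nat.strong_induction_on with
    | _ n ih =>
      rintro i rfl j hij hcase
      have hself : ∀ (h0 : i ≠ 0), i ∈ V (i.pred h0) := by
        intro h0
        exact (hV _ i).2 (Or.inl (Fin.succ_pred i h0).symm)
      rcases hcase with rfl | ⟨hj0, hiV⟩
      · -- j = 0
        have h0 : i ≠ 0 := hij
        by_cases hc : p (i.pred h0) = 0
        · exact ⟨i.pred h0, hc, hself h0⟩
        · obtain ⟨k, hk1, hk2⟩ := ih _ (hdec i h0) _ rfl 0 hc (Or.inl rfl)
          exact ⟨k, hk1, (hV k i).2 (Or.inr ⟨h0, hk2⟩)⟩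
      · -- j ≠ 0, i ∈ V (j.pred hj0)
        have hne : i ≠ (j.pred hj0).succ := by rw [Fin.succ_pred]; exact hij
        rcases (hV _ i).1 hiV with h | ⟨h0, hq⟩
        · exact absurd h hne
        · by_cases hc : p (i.pred h0) = j
          · exact ⟨i.pred h0, hc, hself h0⟩
          · obtain ⟨k, hk1, hk2⟩ := ih _ (hdec i h0) _ rfl j hc (Or.inr ⟨hj0, hq⟩)
            exact ⟨k, hk1, (hV k i).2 (Or.inr ⟨h0, hk2⟩)⟩
  intro i j
  rw [Matrix.mul_apply]
  -- split the sum
  have hsum : ∀ k : Fin m, J i k * Ξ k j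
      = (if p k = j then J i k else 0) - (if k.succ = j then J i k else 0) := by
    intro k
    have hne : p k ≠ k.succ := ne_of_lt (hp k)
    rw [hΞ]
    by_cases h1 : j = k.succ
    · have h2 : p k ≠ j := fun h => hne (h.trans h1)
      rw [if_pos h1, if_neg h2, if_pos h1.symm]
      ring
    · by_cases h2 : j = p k
      · rw [if_neg h1, if_pos h2, if_pos h2.symm, if_neg (fun h => h1 h.symm)]
        ring
      · rw [if_neg h1, if_neg h2, if_neg (fun h => h2 h.symm),
          if_neg (fun h => h1 h.symm)]
        ring
  rw [Finset.sum_congr rfl (fun k _ => hsum k), Finset.sum_sub_distrib]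
  -- second sum
  have hsum2 : (∑ k : Fin m, if k.succ = j then J i k else 0)
      = if h : j = 0 then 0 else J i (j.pred h) := by
    split_ifs with h
    · apply Finset.sum_eq_zero
      intro k _
      rw [if_neg (fun hc => (Fin.succ_ne_zero k) (hc.trans h))]
    · rw [Finset.sum_eq_single (j.pred h)]
      · rw [if_pos (Fin.succ_pred j h)]
      · intro k _ hk
        rw [if_neg]
        intro hc
        exact hk (Fin.succ_injective _ (hc.trans (Fin.succ_pred j h).symm))
      · intro hmem; exact absurd (Finset.mem_univ _) hmem
  -- first sum
  set S1 := Finset.univ.filter fun k : Fin m => p k = j with hS1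
  set S2 := S1.filter fun k : Fin m => i ∈ V k with hS2
  have hsum1 : (∑ k : Fin m, if p k = j then J i k else 0)
      = (D j : ℝ) - (S2.card : ℝ) := by
    rw [← Finset.sum_filter, ← hS1]
    have : ∀ k ∈ S1, J i k = if i ∈ V k then (0:ℝ) else 1 := fun k _ => hJ i k
    rw [Finset.sum_congr rfl this]
    have hsplit : ∑ k ∈ S1, (if i ∈ V k then (0:ℝ) else 1)
        = ∑ k ∈ S1, ((1:ℝ) - if i ∈ V k then 1 else 0) := by
      apply Finset.sum_congr rfl
      intro k _
      split_ifs <;> ring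
    rw [hsplit, Finset.sum_sub_distrib, Finset.sum_const, ← Finset.sum_filter,
      ← hS2, Finset.sum_const]
    simp [hD, hS1]
  rw [hsum1, hsum2]
  -- now case analysis
  by_cases hij : i = j
  · subst hij
    rw [if_pos rfl]
    have hS2e : S2 = ∅ := by
      rw [Finset.eq_empty_iff_forall_notMem]
      intro k hk
      rw [hS2, Finset.mem_filter, hS1, Finset.mem_filter] at hk
      obtain ⟨⟨_, hpk⟩, hiVk⟩ := hk
      have := L1 _ i rfl k hiVk
      rw [← hpk] at this
      exact absurd (lt_of_lt_of_le (hp k) this) (lt_irrefl _)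
    rw [hS2e]
    split_ifs with h
    · simp
    · rw [hJ, if_pos]
      · simp
      · have h2 := L2 (i.pred h)
        rwa [Fin.succ_pred] at h2
  · rw [if_neg hij]
    -- claim: S2.card + (the J-term as 0/1) = 1
    by_cases hj0 : j = 0
    · -- root case: term 0, card = 1
      rw [dif_pos hj0]
      have hcard : S2.card = 1 := by
        obtain ⟨k, hk1, hk2⟩ := E _ i rfl j hij (Or.inl hj0)
        rw [Finset.card_eq_one]
        refine ⟨k, Finset.eq_singleton_iff_unique_mem.2 ⟨?_, ?_⟩⟩
        · rw [hS2, Finset.mem_filter, hS1, Finset.mem_filter]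
          exact ⟨⟨Finset.mem_univ _, hk1⟩, hk2⟩
        · intro k' hk'
          rw [hS2, Finset.mem_filter, hS1, Finset.mem_filter] at hk'
          exact U _ i rfl k' k (hk'.1.2.trans hk1.symm) hk'.2 hk2
      rw [hcard]
      push_cast
      ring
    · rw [dif_neg hj0]
      by_cases hiV : i ∈ V (j.pred hj0)
      · -- i in subtree of j: J-term 0, card 1
        rw [hJ, if_pos hiV]
        have hcard : S2.card = 1 := by
          obtain ⟨k, hk1, hk2⟩ := E _ i rfl j hij (Or.inr ⟨hj0, hiV⟩)
          rw [Finset.card_eq_one]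
          refine ⟨k, Finset.eq_singleton_iff_unique_mem.2 ⟨?_, ?_⟩⟩
          · rw [hS2, Finset.mem_filter, hS1, Finset.mem_filter]
            exact ⟨⟨Finset.mem_univ _, hk1⟩, hk2⟩
          · intro k' hk'
            rw [hS2, Finset.mem_filter, hS1, Finset.mem_filter] at hk'
            exact U _ i rfl k' k (hk'.1.2.trans hk1.symm) hk'.2 hk2
        rw [hcard]
        push_cast
        ring
      · -- i not in subtree: J-term 1, card 0
        rw [hJ, if_neg hiV]
        have hS2e : S2 = ∅ := by
          rw [Finset.eq_empty_iff_forall_notMem]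
          intro k hk
          rw [hS2, Finset.mem_filter, hS1, Finset.mem_filter] at hk
          obtain ⟨⟨_, hpk⟩, hiVk⟩ := hk
          apply hiV
          refine M _ i rfl k (j.pred hj0) hiVk ?_
          rw [hpk]
          have h2 := L2 (j.pred hj0)
          rwa [Fin.succ_pred] at h2
        rw [hS2e]
        simp
end

section
/- Let L ∈ ℝ^{N×N} be a matrix with zero row sums, let T be a directed spanning tree on {1,...,N} rooted at 1 with parent map p (p(k) < k), let Ξ ∈ ℝ^{(N−1)×N} be its edge-difference matrix (Ξ_{k,k+1} = −1, Ξ_{k,p(k+1)} = 1, zero otherwise), and let J ∈ ℝ^{N×(N−1)} be defined by J_{ik} = 0 if node i lies in the subtree of T rooted at k+1, and J_{ik} = 1 otherwise. Define Q = Ξ L J ∈ ℝ^{(N−1)×(N−1)}. Then Ξ L = Q Ξ. -/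
open Matrix

theorem stmt_4 (m : ℕ) (L : Matrix (Fin (m + 1)) (Fin (m + 1)) ℝ)
    (hL : ∀ i, ∑ j, L i j = 0)
    (p : Fin m → Fin (m + 1)) (hp : ∀ k, p k < k.succ)
    (V : Fin m → Finset (Fin (m + 1)))
    (hV : ∀ (c : Fin m) (i : Fin (m + 1)),
      i ∈ V c ↔ (i = c.succ ∨ ∃ h : i ≠ 0, p (i.pred h) ∈ V c))
    (Ξ : Matrix (Fin m) (Fin (m + 1)) ℝ)
    (hΞ : ∀ k j, Ξ k j = if j = k.succ then -1 else if j = p k then 1 else 0)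
    (J : Matrix (Fin (m + 1)) (Fin m) ℝ)
    (hJ : ∀ i k, J i k = if i ∈ V k then 0 else 1)
    (Q : Matrix (Fin m) (Fin m) ℝ) (hQ : Q = Ξ * L * J) :
    Ξ * L = Q * Ξ := by
  -- parent is strictly smaller
  have hparent : ∀ (t : Fin (m+1)) (h : t ≠ 0), (p (t.pred h)).val < t.val := by
    intro t h
    have := hp (t.pred h)
    rw [Fin.succ_pred] at this
    exact this
  -- subtree elements are ≥ subtree root
  have hB : ∀ (n : ℕ) (t : Fin (m+1)) (k : Fin m), t.val ≤ n → t ∈ V k →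
      (k.succ : Fin (m+1)).val ≤ t.val := by
    intro n
    induction n with
    | zero =>
      intro t k ht htV
      rcases (hV k t).1 htV with h | ⟨h, _⟩
      · exact le_of_eq (congrArg Fin.val h).symm
      · exact absurd (Fin.ext (Nat.le_zero.1 ht)) h
    | succ n ih =>
      intro t k ht htV
      rcases (hV k t).1 htV with h | ⟨h, hpar⟩
      · exact le_of_eq (congrArg Fin.val h).symm
      · have h1 := hparent t h
        have h2 := ih (p (t.pred h)) k (by omega) hpar
        omega
  have hE : ∀ k, (0 : Fin (m+1)) ∉ V k := by
    intro k h
    have := hB 0 0 k le_rfl h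
    simp [Fin.val_succ] at this
  have hnotself : ∀ k, p k ∉ V k := by
    intro k h
    have h1 := hB (p k).val (p k) k le_rfl h
    have h2 := hp k
    rw [Fin.lt_def] at h2
    omega
  -- sibling subtrees are disjoint
  have hA : ∀ (n : ℕ) (t : Fin (m+1)) (k k' : Fin m), t.val ≤ n → p k = p k' →
      t ∈ V k → t ∈ V k' → k = k' := by
    intro n
    induction n with
    | zero =>
      intro t k k' ht _ htV _
      have : t = 0 := Fin.ext (Nat.le_zero.1 ht)
      exact absurd (this ▸ htV) (hE k)
    | succ n ih =>
      intro t k k' ht hpp htV htV'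
      rcases (hV k t).1 htV with h | ⟨h, hpar⟩
      · rcases (hV k' t).1 htV' with h' | ⟨h', hpar'⟩
        · exact Fin.succ_injective _ (h ▸ h')
        · have hk : t.pred h' = k := by
            apply Fin.succ_injective
            rw [Fin.succ_pred, h]
          rw [hk, hpp] at hpar'
          exact absurd hpar' (hnotself k')
      · rcases (hV k' t).1 htV' with h' | ⟨h'', hpar'⟩
        · have hk : t.pred h = k' := by
            apply Fin.succ_injective
            rw [Fin.succ_pred, h']
          rw [hk, ← hpp] at hpar
          exact absurd hpar (hnotself k)
        · have he : h'' = h := rfl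
          rw [he] at hpar'
          have h1 := hparent t h
          exact ih (p (t.pred h)) k k' (by omega) hpp hpar hpar'
  -- descending into subtree: t ∈ V k, p k = c.succ → t ∈ V c
  have hCbwd : ∀ (n : ℕ) (t : Fin (m+1)) (c k : Fin m), t.val ≤ n →
      p k = c.succ → t ∈ V k → t ∈ V c := by
    intro n
    induction n with
    | zero =>
      intro t c k ht _ htV
      have : t = 0 := Fin.ext (Nat.le_zero.1 ht)
      exact absurd (this ▸ htV) (hE k)
    | succ n ih =>
      intro t c k ht hpk htV
      rcases (hV k t).1 htV with h | ⟨h, hpar⟩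
      · have hne : t ≠ 0 := by rw [h]; exact (Fin.succ_ne_zero k)
        apply (hV c t).2
        right
        refine ⟨hne, ?_⟩
        have hk : t.pred hne = k := by
          apply Fin.succ_injective; rw [Fin.succ_pred, h]
        rw [hk, hpk]
        exact (hV c c.succ).2 (Or.inl rfl)
      · have h1 := hparent t h
        have h2 := ih (p (t.pred h)) c k (by omega) hpk hpar
        exact (hV c t).2 (Or.inr ⟨h, h2⟩)
  -- splitting off a child subtree
  have hCfwd : ∀ (n : ℕ) (t : Fin (m+1)) (c : Fin m), t.val ≤ n →
      t ∈ V c → t ≠ c.succ → ∃ k, p k = c.succ ∧ t ∈ V k := by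
    intro n
    induction n with
    | zero =>
      intro t c ht htV _
      have : t = 0 := Fin.ext (Nat.le_zero.1 ht)
      exact absurd (this ▸ htV) (hE c)
    | succ n ih =>
      intro t c ht htV hne
      rcases (hV c t).1 htV with h | ⟨h, hpar⟩
      · exact absurd h hne
      · by_cases hu : p (t.pred h) = c.succ
        · refine ⟨t.pred h, hu, ?_⟩
          exact (hV (t.pred h) t).2 (Or.inl (Fin.succ_pred t h).symm)
        · have h1 := hparent t h
          obtain ⟨k, hk1, hk2⟩ := ih (p (t.pred h)) c (by omega) hpar hu
          exact ⟨k, hk1, (hV k t).2 (Or.inr ⟨h, hk2⟩)⟩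
  -- every nonzero node is in some subtree hanging off the root
  have hD : ∀ (n : ℕ) (t : Fin (m+1)), t.val ≤ n → t ≠ 0 →
      ∃ k, p k = 0 ∧ t ∈ V k := by
    intro n
    induction n with
    | zero =>
      intro t ht h
      exact absurd (Fin.ext (Nat.le_zero.1 ht)) h
    | succ n ih =>
      intro t ht h
      by_cases hu : p (t.pred h) = 0
      · refine ⟨t.pred h, hu, ?_⟩
        exact (hV (t.pred h) t).2 (Or.inl (Fin.succ_pred t h).symm)
      · have h1 := hparent t h
        obtain ⟨k, hk1, hk2⟩ := ih (p (t.pred h)) (by omega) hu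
        exact ⟨k, hk1, (hV k t).2 (Or.inr ⟨h, hk2⟩)⟩
  -- the set of children edges of node j
  set S : Fin (m+1) → Finset (Fin m) := fun j => Finset.univ.filter (fun k => p k = j) with hS
  -- sum over children subtrees
  have hsum : ∀ (t j : Fin (m+1)), ∑ k ∈ S j, J t k =
      if ∃ k, p k = j ∧ t ∈ V k then ((S j).card : ℝ) - 1 else ((S j).card : ℝ) := by
    intro t j
    by_cases hex : ∃ k, p k = j ∧ t ∈ V k
    · obtain ⟨k0, hk0, hk0V⟩ := hex
      have hk0S : k0 ∈ S j := by simp [hS, hk0]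
      rw [if_pos ⟨k0, hk0, hk0V⟩]
      have hcong : ∀ k ∈ S j, J t k = if k = k0 then 0 else 1 := by
        intro k hk
        rw [hJ]
        by_cases hkk : k = k0
        · simp [hkk, hk0V]
        · have : t ∉ V k := by
            intro hmem
            have hpk : p k = j := by simpa [hS] using hk
            exact hkk (hA t.val t k k0 le_rfl (hpk.trans hk0.symm) hmem hk0V)
          simp [hkk, this]
      rw [Finset.sum_congr rfl hcong]
      have : ∀ k ∈ S j, (if k = k0 then (0:ℝ) else 1) = 1 - (if k = k0 then 1 else 0) := by
        intro k _; by_cases hkk : k = k0 <;> simp [hkk]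
      rw [Finset.sum_congr rfl this, Finset.sum_sub_distrib, Finset.sum_const,
        Finset.sum_ite_eq' (S j) k0 (fun _ => (1:ℝ)), if_pos hk0S]
      simp
    · rw [if_neg hex]
      have hcong : ∀ k ∈ S j, J t k = 1 := by
        intro k hk
        rw [hJ, if_neg]
        intro hmem
        have hpk : p k = j := by simpa [hS] using hk
        exact hex ⟨k, hpk, hmem⟩
      rw [Finset.sum_congr rfl hcong, Finset.sum_const]
      simp
  -- the key entrywise formula for J * Ξ
  have hM : ∀ (t j : Fin (m+1)), (J * Ξ) t j =
      (if t = j then 1 else 0) + (((S j).card : ℝ) - 1) := by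
    intro t j
    rw [Matrix.mul_apply]
    have hXi : ∀ k, Ξ k j = (if j = k.succ then (-1:ℝ) else 0) + (if j = p k then 1 else 0) := by
      intro k
      rw [hΞ]
      by_cases h1 : j = k.succ
      · have h2 : k.succ ≠ p k := (hp k).ne'
        simp [h1, h2]
      · by_cases h2 : j = p k <;> simp [h1, h2, (hp k).ne]
    have hsplit : ∑ k, J t k * Ξ k j =
        (∑ k, J t k * (if j = k.succ then (-1:ℝ) else 0)) +
        (∑ k, J t k * (if j = p k then (1:ℝ) else 0)) := by
      rw [← Finset.sum_add_distrib]
      apply Finset.sum_congr rfl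
      intro k _
      rw [hXi k, mul_add]
    rw [hsplit]
    -- second sum
    have hsum2 : (∑ k, J t k * (if j = p k then (1:ℝ) else 0)) = ∑ k ∈ S j, J t k := by
      rw [hS, Finset.sum_filter]
      apply Finset.sum_congr rfl
      intro k _
      by_cases h : p k = j
      · simp [h]
      · simp [h, Ne.symm h]
    rw [hsum2, hsum t j]
    -- first sum
    by_cases hj : j = 0
    · have hsum1 : (∑ k, J t k * (if j = k.succ then (-1:ℝ) else 0)) = 0 := by
        apply Finset.sum_eq_zero
        intro k _
        rw [if_neg, mul_zero]
        rw [hj]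
        exact (Fin.succ_ne_zero k).symm
      rw [hsum1]
      by_cases ht : t = 0
      · have hne : ¬ ∃ k, p k = j ∧ t ∈ V k := by
          rintro ⟨k, _, hmem⟩
          exact hE k (ht ▸ hmem)
        rw [if_neg hne, if_pos (ht.trans hj.symm)]
        ring
      · obtain ⟨k0, hk0, hk0V⟩ := hD t.val t le_rfl ht
        have hex : ∃ k, p k = j ∧ t ∈ V k := ⟨k0, hj ▸ hk0, hk0V⟩
        rw [if_pos hex, if_neg (by rw [hj]; exact ht)]
    · have hsum1 : (∑ k, J t k * (if j = k.succ then (-1:ℝ) else 0)) = -(J t (j.pred hj)) := by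
        have : ∀ k ∈ Finset.univ, J t k * (if j = k.succ then (-1:ℝ) else 0) =
            if k = j.pred hj then -(J t k) else 0 := by
          intro k _
          by_cases hk : k = j.pred hj
          · rw [if_pos hk, if_pos, mul_neg_one]
            rw [hk, Fin.succ_pred]
          · rw [if_neg hk, if_neg, mul_zero]
            intro he
            apply hk
            apply Fin.succ_injective
            rw [Fin.succ_pred, ← he]
        rw [Finset.sum_congr rfl this, Finset.sum_ite_eq' Finset.univ (j.pred hj)
          (fun k => -(J t k)), if_pos (Finset.mem_univ _)]
      rw [hsum1, hJ]
      have hjs : (j.pred hj).succ = j := Fin.succ_pred j hj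
      by_cases htj : t = j
      · have htV : t ∈ V (j.pred hj) := (hV _ t).2 (Or.inl (htj.trans hjs.symm))
        have hne : ¬ ∃ k, p k = j ∧ t ∈ V k := by
          rintro ⟨k, hk, hmem⟩
          have h1 := hB t.val t k le_rfl hmem
          have h2 := hp k
          rw [Fin.lt_def, hk, ← htj] at h2
          omega
        rw [if_pos htV, if_neg hne, if_pos htj]
        ring
      · by_cases htV : t ∈ V (j.pred hj)
        · obtain ⟨k0, hk0, hk0V⟩ := hCfwd t.val t (j.pred hj) le_rfl htV
            (by rw [hjs]; exact htj)
          have hex : ∃ k, p k = j ∧ t ∈ V k := ⟨k0, by rw [hk0, hjs], hk0V⟩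
          rw [if_pos htV, if_pos hex, if_neg htj]
          ring
        · have hne : ¬ ∃ k, p k = j ∧ t ∈ V k := by
            rintro ⟨k, hk, hmem⟩
            exact htV (hCbwd t.val t (j.pred hj) k le_rfl (by rw [hk, hjs]) hmem)
          rw [if_neg htV, if_neg hne, if_neg htj]
          ring
  -- L * (J * Ξ) = L
  have key : L * (J * Ξ) = L := by
    ext i j
    rw [Matrix.mul_apply]
    have : ∀ t ∈ Finset.univ, L i t * (J * Ξ) t j =
        L i t * (if t = j then 1 else 0) + L i t * (((S j).card : ℝ) - 1) := by
      intro t _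
      rw [hM t j, mul_add]
    rw [Finset.sum_congr rfl this, Finset.sum_add_distrib, ← Finset.sum_mul, hL i, zero_mul,
      add_zero]
    have : ∀ t ∈ Finset.univ, L i t * (if t = j then (1:ℝ) else 0) =
        if t = j then L i t else 0 := by
      intro t _
      by_cases h : t = j <;> simp [h]
    rw [Finset.sum_congr rfl this, Finset.sum_ite_eq' Finset.univ j (L i),
      if_pos (Finset.mem_univ _)]
  rw [hQ, Matrix.mul_assoc (Ξ * L) J Ξ, Matrix.mul_assoc Ξ L (J * Ξ), key]
end

section
/- Let T be a directed spanning tree on {1,...,N} rooted at 1 with parent map p (p(k) < k), edge weights a_{k+1} > 0 on the edge from p(k+1) to k+1, and let L̄ be the Laplacian of T, i.e., L̄_{k+1,k+1} = a_{k+1}, L̄_{k+1,p(k+1)} = −a_{k+1}, all other entries zero (row 1 is zero). Let Ξ and J be the associated edge-difference and subtree-indicator matrices, and Q̄ = Ξ L̄ J. Then Q̄_{kj} = a_{j+1} if j = k; Q̄_{kj} = −a_{j+1} if j+1 = p(k+1); and Q̄_{kj} = 0 otherwise. -/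
open Matrix

lemma sum_two {ι : Type*} [Fintype ι] [DecidableEq ι] (f : ι → ℝ) (x y : ι) (hxy : x ≠ y)
    (h : ∀ z, z ≠ x → z ≠ y → f z = 0) : ∑ z, f z = f x + f y := by
  rw [← Finset.sum_subset (Finset.subset_univ {x, y})
    (fun z _ hz => h z (fun e => hz (by simp [e])) (fun e => hz (by simp [e]))),
    Finset.sum_pair hxy]

theorem stmt_6 (m : ℕ) (p : Fin m → Fin (m + 1)) (hp : ∀ k, p k < k.succ)
    (a : Fin m → ℝ) (ha : ∀ k, 0 < a k)
    (Lbar : Matrix (Fin (m + 1)) (Fin (m + 1)) ℝ)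
    (hLbar : ∀ i j, Lbar i j =
      if h : i = 0 then 0
      else if j = i then a (i.pred h)
      else if j = p (i.pred h) then -(a (i.pred h)) else 0)
    (V : Fin m → Finset (Fin (m + 1)))
    (hV : ∀ (c : Fin m) (i : Fin (m + 1)),
      i ∈ V c ↔ (i = c.succ ∨ ∃ h : i ≠ 0, p (i.pred h) ∈ V c))
    (Ξ : Matrix (Fin m) (Fin (m + 1)) ℝ)
    (hΞ : ∀ k j, Ξ k j = if j = k.succ then -1 else if j = p k then 1 else 0)
    (J : Matrix (Fin (m + 1)) (Fin m) ℝ)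
    (hJ : ∀ i k, J i k = if i ∈ V k then 0 else 1)
    (Qbar : Matrix (Fin m) (Fin m) ℝ) (hQbar : Qbar = Ξ * Lbar * J) :
    ∀ k j : Fin m, Qbar k j =
      if j = k then a j else if p k = j.succ then -(a j) else 0 := by
  -- every element of V j is ≥ j.succ
  have hmin : ∀ (j : Fin m) (n : ℕ) (i : Fin (m + 1)), i.val = n → i ∈ V j →
      (j.succ : Fin (m + 1)) ≤ i := by
    intro j n
    induction n using Nat.strong_induction_on with
    | _ n ih =>
      intro i hin hi
      rcases (hV j i).1 hi with h | ⟨h0, hpi⟩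
      · exact le_of_eq h.symm
      · have hlt : p (i.pred h0) < i := by
          have := hp (i.pred h0)
          rwa [Fin.succ_pred] at this
        have hlt' : (p (i.pred h0)).val < n := by
          have := Fin.lt_iff_val_lt_val.1 hlt; omega
        exact le_trans (ih _ hlt' _ rfl hpi) (le_of_lt hlt)
  have hnotmem : ∀ (j : Fin m) (i : Fin (m + 1)), i < j.succ → i ∉ V j := by
    intro j i hij hi
    exact absurd (hmin j i.val i rfl hi) (not_le.2 hij)
  intro k j
  -- first : row k of Ξ * Lbar
  have hrow : ∀ l, (Ξ * Lbar) k l = Lbar (p k) l - Lbar k.succ l := by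
    intro l
    rw [Matrix.mul_apply]
    rw [sum_two (fun i => Ξ k i * Lbar i l) k.succ (p k) (hp k).ne'
      (fun z hz1 hz2 => by simp [hΞ, hz1, hz2])]
    simp [hΞ, (hp k).ne]
    ring
  have hQ : Qbar k j = (∑ l, Lbar (p k) l * J l j) - ∑ l, Lbar k.succ l * J l j := by
    rw [hQbar, Matrix.mul_apply]
    simp only [hrow, sub_mul]
    rw [Finset.sum_sub_distrib]
  -- second sum
  have hks0 : (k.succ : Fin (m + 1)) ≠ 0 := Fin.succ_ne_zero k
  have hsum2 : ∑ l, Lbar k.succ l * J l j = a k * J k.succ j - a k * J (p k) j := by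
    rw [sum_two (fun l => Lbar k.succ l * J l j) k.succ (p k) (hp k).ne'
      (fun z hz1 hz2 => by
        simp only [hLbar, dif_neg hks0, Fin.pred_succ, if_neg hz1, if_neg hz2, zero_mul])]
    simp only [hLbar, dif_neg hks0, Fin.pred_succ, if_neg (hp k).ne]
    norm_num
    ring
  -- case analysis
  by_cases hjk : j = k
  · subst hjk
    have hJ1 : J j.succ j = 0 := by rw [hJ, if_pos ((hV j j.succ).2 (Or.inl rfl))]
    have hJ2 : J (p j) j = 1 := by rw [hJ, if_neg (hnotmem j (p j) (hp j))]
    rw [if_pos rfl, hQ, hsum2, hJ1, hJ2]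
    by_cases hp0 : p j = (0 : Fin (m + 1))
    · have : ∀ l, Lbar (p j) l = 0 := fun l => by rw [hLbar, dif_pos hp0]
      simp [this]
    · set q := (p j).pred hp0 with hq
      have hqs : q.succ = p j := Fin.succ_pred _ _
      have hne : p q ≠ p j := by rw [← hqs]; exact (hp q).ne
      have hsum1 : ∑ l, Lbar (p j) l * J l j = a q * J (p j) j - a q * J (p q) j := by
        rw [sum_two (fun l => Lbar (p j) l * J l j) (p j) (p q) hne.symm
          (fun z hz1 hz2 => by
            simp only [hLbar, dif_neg hp0, ← hq, if_neg hz1, if_neg hz2, zero_mul])]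
        simp only [hLbar, dif_neg hp0, ← hq, if_neg hne]
        norm_num
        ring
      have hJ3 : J (p q) j = 1 := by
        refine (hJ _ _).trans (if_neg (hnotmem j (p q) ?_))
        calc p q < q.succ := hp q
          _ = p j := hqs
          _ < j.succ := hp j
      rw [hsum1, hJ2, hJ3]
      ring
  · rw [if_neg hjk]
    -- k.succ ∈ V j ↔ p k ∈ V j
    have hmemks : (k.succ : Fin (m + 1)) ∈ V j ↔ p k ∈ V j := by
      rw [hV j k.succ]
      constructor
      · rintro (h | ⟨h0, hm⟩)
        · exact absurd (Fin.succ_injective _ h).symm hjk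
        · rwa [Fin.pred_succ] at hm
      · intro h
        exact Or.inr ⟨hks0, by rwa [Fin.pred_succ]⟩
    have hJeq : J k.succ j = J (p k) j := by
      rw [hJ, hJ]
      by_cases hmem : p k ∈ V j
      · rw [if_pos (hmemks.2 hmem), if_pos hmem]
      · rw [if_neg (fun h => hmem (hmemks.1 h)), if_neg hmem]
    rw [hQ, hsum2, hJeq]
    by_cases hp0 : p k = (0 : Fin (m + 1))
    · have : ∀ l, Lbar (p k) l = 0 := fun l => by rw [hLbar, dif_pos hp0]
      rw [if_neg (by rw [hp0]; exact (Fin.succ_ne_zero j).symm)]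
      simp [this]
    · set q := (p k).pred hp0 with hq
      have hqs : q.succ = p k := Fin.succ_pred _ _
      have hne : p q ≠ p k := by rw [← hqs]; exact (hp q).ne
      have hsum1 : ∑ l, Lbar (p k) l * J l j = a q * J (p k) j - a q * J (p q) j := by
        rw [sum_two (fun l => Lbar (p k) l * J l j) (p k) (p q) hne.symm
          (fun z hz1 hz2 => by
            simp only [hLbar, dif_neg hp0, ← hq, if_neg hz1, if_neg hz2, zero_mul])]
        simp only [hLbar, dif_neg hp0, ← hq, if_neg hne]
        norm_num
        ring
      rw [hsum1]
      by_cases hpkj : p k = j.succ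
      · rw [if_pos hpkj]
        have hqj : q = j := by
          have : q.succ = j.succ := by rw [hqs, hpkj]
          exact Fin.succ_injective _ this
        have hJ4 : J (p k) j = 0 := by
          rw [hJ, if_pos ((hV j (p k)).2 (Or.inl hpkj))]
        have hJ5 : J (p q) j = 1 := by
          rw [hJ, if_neg (hnotmem j (p q) (by rw [hqj]; exact hp j))]
        rw [hJ4, hJ5, hqj]
        ring
      · rw [if_neg hpkj]
        have hmempk : p k ∈ V j ↔ p q ∈ V j := by
          rw [hV j (p k)]
          constructor
          · rintro (h | ⟨h0, hm⟩)
            · exact absurd h hpkj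
            · rwa [← hq] at hm
          · intro h
            exact Or.inr ⟨hp0, by rwa [← hq]⟩
        have hJeq2 : J (p k) j = J (p q) j := by
          rw [hJ, hJ]
          by_cases hmem : p q ∈ V j
          · rw [if_pos (hmempk.2 hmem), if_pos hmem]
          · rw [if_neg (fun h => hmem (hmempk.1 h)), if_neg hmem]
        rw [hJeq2]
        ring
end

section
/- Fix N ≥ 2 and a parent map p : {2,...,N} → {1,...,N} with p(k) < k (a directed spanning tree with topological order). Consider any family of symmetric matrices S(φ) ∈ ℝ^{(N−1)×(N−1)} parametrized by positive reals φ_2,...,φ_N, where S(φ)_{kk} = 2φ_{k+1}, and for j < k, |S(φ)_{kj}| = |S(φ)_{jk}| ≤ φ_{j+1} (each off-diagonal entry in column j is either 0, φ_{j+1}, or −φ_{j+1}). Then there exists a choice of φ_2,...,φ_N > 0 such that S(φ) is positive definite; moreover, for any η > 0 the φ's can be chosen so that λ_min(S(φ)) ≥ η. -/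
/-!
Take `φ k = η m^(2k)` and conjugate `S` by `D = diag(m^k)`. Every off-diagonal entry in row `k`
of `D S D⁻¹` is at most `φ k / m` in absolute value: below the diagonal because `φ` grows faster
than the scaling, above it because the scaling decays. Hence `D S D⁻¹` is diagonally dominant
with margin `φ k ≥ η`, and the weighted AM–GM inequality `2|ab| ≤ t a² + t⁻¹ b²` with
`t = d k / d j` turns scaled diagonal dominance into `x ⬝ᵥ S *ᵥ x ≥ η ‖x‖²`.
-/

open Matrix Finset

lemma neg_abs_mul_weighted_sq_le_two_mul (s a b : ℝ) {t : ℝ} (ht : 0 < t) :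
    -(|s| * (t * a ^ 2 + t⁻¹ * b ^ 2)) ≤ 2 * (a * s * b) := by
  have hamgm : 2 * |a| * |b| ≤ t * a ^ 2 + t⁻¹ * b ^ 2 := by
    have hsq : 0 ≤ t⁻¹ * (t * |a| - |b|) ^ 2 := by positivity
    have hexpand : t⁻¹ * (t * |a| - |b|) ^ 2 = t * a ^ 2 - 2 * |a| * |b| + t⁻¹ * b ^ 2 := by
      rw [← sq_abs a, ← sq_abs b]
      field_simp
      ring
    linarith
  have habs : |a * s * b| = |s| * (|a| * |b|) := by rw [abs_mul, abs_mul]; ring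
  nlinarith [neg_abs_le (a * s * b), abs_nonneg s]

namespace Matrix

variable {ι : Type*} [Fintype ι] [DecidableEq ι]

/-- The off-diagonal absolute row sum of `diagonal d * S * (diagonal d)⁻¹`. -/
noncomputable def scaledOffDiagRowSum (S : Matrix ι ι ℝ) (d : ι → ℝ) (k : ι) : ℝ :=
  ∑ j ∈ univ.erase k, |S k j| * (d k / d j)

theorem sum_diag_sub_scaledOffDiagRowSum_mul_sq_le {S : Matrix ι ι ℝ} (hS : S.IsSymm)
    {d : ι → ℝ} (hd : ∀ i, 0 < d i) (x : ι → ℝ) :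
    ∑ k, (S k k - S.scaledOffDiagRowSum d k) * x k ^ 2 ≤ x ⬝ᵥ S *ᵥ x := by
  set h : ι → ι → ℝ := fun k j =>
    (if j = k then S k k else -(|S k j| * (d k / d j))) * x k ^ 2 with h_def
  have hrow : ∀ k, ∑ j, h k j = (S k k - S.scaledOffDiagRowSum d k) * x k ^ 2 := by
    intro k
    rw [← add_sum_erase _ _ (mem_univ k), scaledOffDiagRowSum, sub_mul, sub_eq_add_neg,
      sum_mul, ← sum_neg_distrib]
    refine congrArg₂ (· + ·) (by simp [h_def]) (sum_congr rfl fun j hj => ?_)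
    simp [h_def, if_neg (ne_of_mem_erase hj)]
  have hpair : ∀ k j, (h k j + h j k) / 2 ≤ x k * (S k j * x j) := by
    intro k j
    by_cases hjk : j = k
    · subst hjk
      simp only [h_def, if_true]
      exact le_of_eq (by ring)
    · have hamgm := neg_abs_mul_weighted_sq_le_two_mul (S k j) (x k) (x j)
        (div_pos (hd k) (hd j))
      simp only [h_def, if_neg hjk, if_neg (Ne.symm hjk), hS.apply k j, inv_div] at hamgm ⊢
      linarith
  calc ∑ k, (S k k - S.scaledOffDiagRowSum d k) * x k ^ 2
      = ∑ k, ∑ j, h k j := by simp only [hrow]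
    _ = ∑ k, ∑ j, (h k j + h j k) / 2 := by
      simp only [← sum_div, sum_add_distrib]
      rw [sum_comm (f := fun k j => h j k)]
      ring
    _ ≤ ∑ k, ∑ j, x k * (S k j * x j) := sum_le_sum fun k _ => sum_le_sum fun j _ => hpair k j
    _ = x ⬝ᵥ S *ᵥ x := by simp only [dotProduct, mulVec, mul_sum]

theorem scaledOffDiagRowSum_le_of_abs_le {m : ℕ} {c : ℝ} (hc : 0 ≤ c)
    {S : Matrix (Fin m) (Fin m) ℝ} (hS : S.IsSymm)
    (hoff : ∀ j k : Fin m, j < k → |S k j| ≤ c * (m : ℝ) ^ (2 * (j : ℤ))) (k : Fin m) :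
    S.scaledOffDiagRowSum (fun i => (m : ℝ) ^ (i : ℤ)) k ≤ c * (m : ℝ) ^ (2 * (k : ℤ)) := by
  have hm : (1 : ℝ) ≤ m := Nat.one_le_cast.mpr k.pos
  have hm0 : (m : ℝ) ≠ 0 := by positivity
  have hentry : ∀ j ∈ univ.erase k,
      |S k j| * ((m : ℝ) ^ (k : ℤ) / (m : ℝ) ^ (j : ℤ)) ≤ c * (m : ℝ) ^ (2 * (k : ℤ) - 1) := by
    intro j hj
    rw [← zpow_sub₀ hm0]
    rcases lt_or_gt_of_ne (ne_of_mem_erase hj) with hjk | hkj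
    · have hjk' : (j : ℕ) < k := hjk
      calc |S k j| * (m : ℝ) ^ ((k : ℤ) - j)
          ≤ c * (m : ℝ) ^ (2 * (j : ℤ)) * (m : ℝ) ^ ((k : ℤ) - j) :=
            mul_le_mul_of_nonneg_right (hoff j k hjk) (by positivity)
        _ = c * (m : ℝ) ^ ((j : ℤ) + k) := by rw [mul_assoc, ← zpow_add₀ hm0]; ring_nf
        _ ≤ c * (m : ℝ) ^ (2 * (k : ℤ) - 1) :=
            mul_le_mul_of_nonneg_left (zpow_le_zpow_right₀ hm (by omega)) hc
    · have hkj' : (k : ℕ) < j := hkj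
      calc |S k j| * (m : ℝ) ^ ((k : ℤ) - j)
          ≤ c * (m : ℝ) ^ (2 * (k : ℤ)) * (m : ℝ) ^ ((k : ℤ) - j) := by
            rw [hS.apply j k]
            exact mul_le_mul_of_nonneg_right (hoff k j hkj) (by positivity)
        _ ≤ c * (m : ℝ) ^ (2 * (k : ℤ)) * (m : ℝ) ^ (-1 : ℤ) :=
            mul_le_mul_of_nonneg_left (zpow_le_zpow_right₀ hm (by omega)) (by positivity)
        _ = c * (m : ℝ) ^ (2 * (k : ℤ) - 1) := by
            rw [mul_assoc, ← zpow_add₀ hm0]; ring_nf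
  calc S.scaledOffDiagRowSum (fun i => (m : ℝ) ^ (i : ℤ)) k
      ≤ ∑ _j ∈ univ.erase k, c * (m : ℝ) ^ (2 * (k : ℤ) - 1) := sum_le_sum hentry
    _ ≤ ∑ _j : Fin m, c * (m : ℝ) ^ (2 * (k : ℤ) - 1) :=
        sum_le_sum_of_subset_of_nonneg (erase_subset _ _) fun _ _ _ => by positivity
    _ = c * (m : ℝ) ^ (2 * (k : ℤ)) := by
        rw [sum_const, card_univ, Fintype.card_fin, nsmul_eq_mul, zpow_sub_one₀ hm0]
        field_simp

end Matrix

theorem stmt_9_general (m : ℕ) (η : ℝ) (hη : 0 < η) :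
    ∃ φ : Fin m → ℝ, (∀ k, 0 < φ k) ∧
      ∀ S : Matrix (Fin m) (Fin m) ℝ, S.IsSymm →
        (∀ k, S k k = 2 * φ k) →
        (∀ j k : Fin m, j < k → |S k j| ≤ φ j) →
        S.PosDef ∧ ∀ x : Fin m → ℝ, η * (x ⬝ᵥ x) ≤ x ⬝ᵥ (S *ᵥ x) := by
  have hm : ∀ k : Fin m, (1 : ℝ) ≤ m := fun k => Nat.one_le_cast.mpr k.pos
  refine ⟨fun k => η * (m : ℝ) ^ (2 * (k : ℤ)),
    fun k => mul_pos hη (zpow_pos (by linarith [hm k]) _), fun S hS hdiag hoff => ?_⟩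
  have hmargin : ∀ k, η ≤ S k k - S.scaledOffDiagRowSum (fun i => (m : ℝ) ^ (i : ℤ)) k := by
    intro k
    have hrow := scaledOffDiagRowSum_le_of_abs_le hη.le hS hoff k
    have hgain : η ≤ η * (m : ℝ) ^ (2 * (k : ℤ)) :=
      le_mul_of_one_le_right hη.le (one_le_zpow₀ (hm k) (by positivity))
    rw [hdiag k]
    linarith
  have hquad : ∀ x : Fin m → ℝ, η * (x ⬝ᵥ x) ≤ x ⬝ᵥ (S *ᵥ x) := fun x =>
    calc η * (x ⬝ᵥ x) = ∑ k, η * x k ^ 2 := by simp only [dotProduct, mul_sum, sq]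
      _ ≤ ∑ k, (S k k - S.scaledOffDiagRowSum (fun i => (m : ℝ) ^ (i : ℤ)) k) * x k ^ 2 :=
        sum_le_sum fun k _ => mul_le_mul_of_nonneg_right (hmargin k) (sq_nonneg _)
      _ ≤ x ⬝ᵥ (S *ᵥ x) :=
        sum_diag_sub_scaledOffDiagRowSum_mul_sq_le hS (fun i => zpow_pos (by linarith [hm i]) _) x
  refine ⟨PosDef.of_dotProduct_mulVec_pos hS fun x hx => ?_, hquad⟩
  have hxx : 0 < x ⬝ᵥ x := by
    rw [← star_trivial x]
    exact dotProduct_star_self_pos_iff.mpr hx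
  simpa only [star_trivial] using (mul_pos hη hxx).trans_le (hquad x)

theorem stmt_9 (m : ℕ) (hm : 1 ≤ m) (p : Fin m → Fin (m + 1))
    (hp : ∀ k, p k < k.succ) (η : ℝ) (hη : 0 < η) :
    ∃ φ : Fin m → ℝ, (∀ k, 0 < φ k) ∧
      ∀ S : Matrix (Fin m) (Fin m) ℝ, S.IsSymm →
        (∀ k, S k k = 2 * φ k) →
        (∀ j k : Fin m, j < k → |S k j| ≤ φ j) →
        S.PosDef ∧ ∀ x : Fin m → ℝ, η * (x ⬝ᵥ x) ≤ x ⬝ᵥ (S *ᵥ x) :=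
  stmt_9_general m η hη
end

section
/- Let A ∈ ℝ^{n×n}, B ∈ ℝ^{n×m}, and suppose there exist a symmetric positive definite P ∈ ℝ^{n×n} and scalars η, θ > 0 such that A P + P Aᵀ − η B Bᵀ + θ P ⪯ 0 (negative semidefinite). Set K = −Bᵀ P⁻¹. Then for every real μ ≥ η/2, the matrix A + μ B K is Hurwitz (all eigenvalues have negative real part); in fact (A + μBK)P + P(A + μBK)ᵀ ⪯ −θP. -/
/-!
With `K = -Bᵀ P⁻¹` the closed-loop matrix `M = A + μ B K` satisfies
`M P + P Mᵀ = A P + P Aᵀ - 2μ B Bᵀ`, so the LMI and `2μ ≥ η` give `M P + P Mᵀ ⪯ -θ P`.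
If `z` is an eigenvalue of `M` and `w` a left eigenvector (`Mᴴ w = z̄ w`), evaluating this
inequality at `w` gives `(2 Re z + θ) wᴴ P w ≤ 0`, and `wᴴ P w > 0` forces `Re z ≤ -θ/2`.
-/

open Matrix ComplexOrder

theorem spectrum.star_mem_star {R A : Type*} [CommSemiring R] [StarRing R] [Ring A] [StarRing A]
    [Algebra R A] [StarModule R A] {r : R} {a : A} (h : r ∈ spectrum R a) :
    star r ∈ spectrum R (star a) := by
  rw [spectrum.mem_iff, algebraMap_star_comm, ← star_sub, isUnit_star]
  exact h

namespace Matrix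

variable {n : Type*} [Fintype n]

theorem exists_mulVec_eq_smul_of_mem_spectrum [DecidableEq n] {M : Matrix n n ℂ} {z : ℂ}
    (hz : z ∈ spectrum ℂ M) : ∃ v ≠ 0, M *ᵥ v = z • v := by
  rw [← spectrum_toLin', ← Module.End.hasEigenvalue_iff_mem_spectrum] at hz
  obtain ⟨v, hv⟩ := hz.exists_hasEigenvector
  exact ⟨v, hv.2, by simpa using hv.apply_eq_smul⟩

theorem PosSemidef.map_ofReal {M : Matrix n n ℝ} (hM : M.PosSemidef) :
    (M.map Complex.ofReal).PosSemidef := by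
  classical
  obtain ⟨C, rfl⟩ : ∃ C : Matrix n n ℝ, M = star C * C := by
    open MatrixOrder in exact CStarAlgebra.nonneg_iff_eq_star_mul_self.mp hM.nonneg
  have hmap : (star C * C).map Complex.ofReal = (C.map Complex.ofReal)ᴴ * C.map Complex.ofReal := by
    rw [← conjTranspose_map _ (fun _ ↦ by simp)]
    exact Matrix.map_mul (f := Complex.ofRealHom)
  rw [hmap]
  exact posSemidef_conjTranspose_mul_self _

theorem PosDef.map_ofReal [DecidableEq n] {M : Matrix n n ℝ} (hM : M.PosDef) :
    (M.map Complex.ofReal).PosDef :=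
  hM.posSemidef.map_ofReal.posDef_iff_isUnit.mpr (hM.isUnit.map Complex.ofRealHom.mapMatrix)

theorem dotProduct_lyapunov_mulVec_of_left_eigenvector {M P : Matrix n n ℂ} {z : ℂ} {w : n → ℂ}
    (θ : ℝ) (hw : Mᴴ *ᵥ w = star z • w) :
    star w ⬝ᵥ (M * P + P * Mᴴ + θ • P) *ᵥ w = (2 * z.re + θ : ℝ) * (star w ⬝ᵥ P *ᵥ w) := by
  have hleft : star w ⬝ᵥ (M * P) *ᵥ w = z * (star w ⬝ᵥ P *ᵥ w) := by
    rw [← mulVec_mulVec, dotProduct_mulVec, ← conjTranspose_conjTranspose M, ← star_mulVec, hw,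
      star_smul, star_star, smul_dotProduct, smul_eq_mul]
  have hright : star w ⬝ᵥ (P * Mᴴ) *ᵥ w = star z * (star w ⬝ᵥ P *ᵥ w) := by
    rw [← mulVec_mulVec, hw, mulVec_smul, dotProduct_smul, smul_eq_mul]
  rw [add_mulVec, add_mulVec, dotProduct_add, dotProduct_add, hleft, hright, smul_mulVec,
    dotProduct_smul, Complex.real_smul, ← add_mul, ← add_mul, Complex.star_def, Complex.add_conj]
  push_cast
  ring

theorem re_le_of_mem_spectrum_of_lyapunov [DecidableEq n] {M P : Matrix n n ℂ} (hP : P.PosDef)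
    {θ : ℝ} (hLyap : (-(M * P + P * Mᴴ + θ • P)).PosSemidef) {z : ℂ} (hz : z ∈ spectrum ℂ M) :
    z.re ≤ -θ / 2 := by
  have hz' : star z ∈ spectrum ℂ Mᴴ := spectrum.star_mem_star hz
  obtain ⟨w, hw0, hw⟩ := exists_mulVec_eq_smul_of_mem_spectrum hz'
  have hpos : 0 < (star w ⬝ᵥ P *ᵥ w).re := hP.re_dotProduct_pos hw0
  have hnonneg := hLyap.re_dotProduct_nonneg w
  rw [neg_mulVec, dotProduct_neg, dotProduct_lyapunov_mulVec_of_left_eigenvector θ hw] at hnonneg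
  simp only [map_neg, RCLike.re_to_complex, Complex.re_ofReal_mul] at hnonneg
  nlinarith

theorem re_le_of_mem_spectrum_map_ofReal_of_lyapunov [DecidableEq n] {M P : Matrix n n ℝ}
    (hP : P.PosDef) {θ : ℝ} (hLyap : (-(M * P + P * Mᵀ + θ • P)).PosSemidef) {z : ℂ}
    (hz : z ∈ spectrum ℂ (M.map Complex.ofReal)) : z.re ≤ -θ / 2 := by
  refine re_le_of_mem_spectrum_of_lyapunov hP.map_ofReal ?_ hz
  have hMt : Mᵀ.map Complex.ofReal = (M.map Complex.ofReal)ᴴ := by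
    rw [← conjTranspose_eq_transpose_of_trivial, conjTranspose_map _ (fun _ ↦ by simp)]
  have hmap : (-(M * P + P * Mᵀ + θ • P)).map Complex.ofReal
      = -(M.map Complex.ofReal * P.map Complex.ofReal
        + P.map Complex.ofReal * Mᵀ.map Complex.ofReal + θ • P.map Complex.ofReal) := by
    ext i j
    simp [mul_apply]
  rw [← hMt, ← hmap]
  exact hLyap.map_ofReal

theorem feedback_mul_add_mul_transpose {m R : Type*} [Fintype m] [DecidableEq n] [CommRing R]
    {A P : Matrix n n R} {B : Matrix n m R} (hPsymm : P.IsSymm) (hP : IsUnit P.det) (μ : R) :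
    (A + μ • (B * -(Bᵀ * P⁻¹))) * P + P * (A + μ • (B * -(Bᵀ * P⁻¹)))ᵀ
      = A * P + P * Aᵀ - (2 * μ) • (B * Bᵀ) := by
  have hBK : (B * -(Bᵀ * P⁻¹)) * P = -(B * Bᵀ) := by
    rw [Matrix.mul_neg, Matrix.neg_mul, Matrix.mul_assoc, Matrix.mul_assoc, nonsing_inv_mul P hP,
      Matrix.mul_one]
  have hKB : P * (B * -(Bᵀ * P⁻¹))ᵀ = -(B * Bᵀ) := by
    rw [← hPsymm.eq, ← transpose_mul, hPsymm.eq, hBK, transpose_neg, transpose_mul,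
      transpose_transpose]
  rw [Matrix.add_mul, transpose_add, Matrix.mul_add, transpose_smul, Matrix.smul_mul,
    Matrix.mul_smul, hBK, hKB]
  module

end Matrix

theorem stmt_10_general (n mdim : ℕ) (A : Matrix (Fin n) (Fin n) ℝ)
    (B : Matrix (Fin n) (Fin mdim) ℝ)
    (P : Matrix (Fin n) (Fin n) ℝ) (hP : P.PosDef) (η θ : ℝ)
    (hθ : 0 < θ)
    (hLMI : (-(A * P + P * Aᵀ - η • (B * Bᵀ) + θ • P)).PosSemidef)
    (K : Matrix (Fin mdim) (Fin n) ℝ) (hK : K = -(Bᵀ * P⁻¹)) :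
    ∀ μ : ℝ, η / 2 ≤ μ →
      (∀ z ∈ spectrum ℂ ((A + μ • (B * K)).map (Complex.ofReal : ℝ → ℂ)), z.re < 0) ∧
      (-((A + μ • (B * K)) * P + P * (A + μ • (B * K))ᵀ + θ • P)).PosSemidef := by
  intro μ hμ
  subst hK
  have hPsymm : P.IsSymm := by simpa using hP.isHermitian
  have hLyap : (-((A + μ • (B * -(Bᵀ * P⁻¹))) * P + P * (A + μ • (B * -(Bᵀ * P⁻¹)))ᵀ
      + θ • P)).PosSemidef := by
    rw [feedback_mul_add_mul_transpose hPsymm hP.det_pos.ne'.isUnit μ]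
    convert hLMI.add ((posSemidef_self_mul_conjTranspose B).smul (sub_nonneg.mpr
      (by linarith : η ≤ 2 * μ))) using 1
    simp only [conjTranspose_eq_transpose_of_trivial]
    module
  refine ⟨fun z hz ↦ ?_, hLyap⟩
  have := re_le_of_mem_spectrum_map_ofReal_of_lyapunov hP hLyap hz
  linarith

theorem stmt_10 (n mdim : ℕ) (A : Matrix (Fin n) (Fin n) ℝ)
    (B : Matrix (Fin n) (Fin mdim) ℝ)
    (P : Matrix (Fin n) (Fin n) ℝ) (hP : P.PosDef) (η θ : ℝ)
    (hη : 0 < η) (hθ : 0 < θ)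
    (hLMI : (-(A * P + P * Aᵀ - η • (B * Bᵀ) + θ • P)).PosSemidef)
    (K : Matrix (Fin mdim) (Fin n) ℝ) (hK : K = -(Bᵀ * P⁻¹)) :
    ∀ μ : ℝ, η / 2 ≤ μ →
      (∀ z ∈ spectrum ℂ ((A + μ • (B * K)).map (Complex.ofReal : ℝ → ℂ)), z.re < 0) ∧
      (-((A + μ • (B * K)) * P + P * (A + μ • (B * K))ᵀ + θ • P)).PosSemidef :=
  stmt_10_general n mdim A B P hP η θ hθ hLMI K hK
end

section
/- Let P ∈ ℝ^{n×n} be symmetric positive definite, A ∈ ℝ^{n×n}, B ∈ ℝ^{n×m}, η, θ > 0 with AP + PAᵀ − ηBBᵀ + θP ⪯ 0. Let S ∈ ℝ^{(N−1)×(N−1)} be symmetric with λ_min(S) ≥ η, and set K = −BᵀP⁻¹. Then the symmetric matrix M = I_{N−1} ⊗ (AP + PAᵀ) − S ⊗ (BBᵀ) satisfies M ⪯ −θ (I_{N−1} ⊗ P). -/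
/-!
Write `L = AP + PAᵀ`. Adding and subtracting `η (I ⊗ BBᵀ)` splits the matrix to be shown
positive semidefinite as `I ⊗ (-(L - ηBBᵀ + θP)) + (S - ηI) ⊗ BBᵀ`. Both summands are Kronecker
products of positive semidefinite matrices: the first by the hypothesis on `L`, the second because
every eigenvalue of `S` is at least `η`.
-/

open Matrix Kronecker

open MatrixOrder in
theorem Matrix.IsHermitian.posSemidef_sub_smul_one {ι : Type*} [Fintype ι] [DecidableEq ι]
    {S : Matrix ι ι ℝ} (hS : S.IsHermitian) {c : ℝ} (hc : ∀ i, c ≤ hS.eigenvalues i) :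
    (S - c • 1).PosSemidef := by
  rw [← Matrix.le_iff, ← Algebra.algebraMap_eq_smul_one]
  refine algebraMap_le_of_le_spectrum (fun x hx => ?_) hS.isSelfAdjoint
  rw [hS.spectrum_real_eq_range_eigenvalues] at hx
  obtain ⟨i, rfl⟩ := hx
  exact hc i

theorem Matrix.posSemidef_self_mul_transpose {m n : Type*} [Fintype m] [Fintype n] (B : Matrix m n ℝ) :
    (B * Bᵀ).PosSemidef := by
  simpa only [conjTranspose_eq_transpose_of_trivial] using posSemidef_self_mul_conjTranspose B

theorem stmt_11_general (n mdim N : ℕ) (P A : Matrix (Fin n) (Fin n) ℝ)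
    (B : Matrix (Fin n) (Fin mdim) ℝ)
    (η θ : ℝ)
    (hLMI : (-(A * P + P * Aᵀ - η • (B * Bᵀ) + θ • P)).PosSemidef)
    (S : Matrix (Fin N) (Fin N) ℝ) (hS : S.IsHermitian)
    (hmin : ∀ i, η ≤ hS.eigenvalues i) :
    (-((1 : Matrix (Fin N) (Fin N) ℝ) ⊗ₖ (A * P + P * Aᵀ) - S ⊗ₖ (B * Bᵀ)
      + θ • ((1 : Matrix (Fin N) (Fin N) ℝ) ⊗ₖ P))).PosSemidef := by
  have hsplit : -((1 : Matrix (Fin N) (Fin N) ℝ) ⊗ₖ (A * P + P * Aᵀ) - S ⊗ₖ (B * Bᵀ)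
      + θ • ((1 : Matrix (Fin N) (Fin N) ℝ) ⊗ₖ P))
      = (1 : Matrix (Fin N) (Fin N) ℝ) ⊗ₖ (-(A * P + P * Aᵀ - η • (B * Bᵀ) + θ • P))
        + (S - η • 1) ⊗ₖ (B * Bᵀ) := by
    ext i j
    simp only [kroneckerMap_apply, Matrix.neg_apply, Matrix.sub_apply, Matrix.add_apply,
      Matrix.smul_apply, smul_eq_mul]
    ring
  rw [hsplit]
  exact (PosSemidef.one.kronecker hLMI).add
    ((hS.posSemidef_sub_smul_one hmin).kronecker (posSemidef_self_mul_transpose B))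

theorem stmt_11 (n mdim N : ℕ) (P A : Matrix (Fin n) (Fin n) ℝ)
    (B : Matrix (Fin n) (Fin mdim) ℝ)
    (hP : P.PosDef) (η θ : ℝ) (hη : 0 < η) (hθ : 0 < θ)
    (hLMI : (-(A * P + P * Aᵀ - η • (B * Bᵀ) + θ • P)).PosSemidef)
    (S : Matrix (Fin N) (Fin N) ℝ) (hS : S.IsHermitian)
    (hmin : ∀ i, η ≤ hS.eigenvalues i) :
    (-((1 : Matrix (Fin N) (Fin N) ℝ) ⊗ₖ (A * P + P * Aᵀ) - S ⊗ₖ (B * Bᵀ)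
      + θ • ((1 : Matrix (Fin N) (Fin N) ℝ) ⊗ₖ P))).PosSemidef :=
  stmt_11_general n mdim N P A B η θ hLMI S hS hmin
end
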